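/- arXiv:math/0009026 — 5 statements merged into one kernel-verified Lean document; each statement's English description precedes it below -/
import Mathlib

section
/- Let f be a continuous function on a convex domain, let P and Q be adjacent regions of the associated arrangement with common facet F, and suppose f = g on P and f = h on Q for affine functions g, h. Then g(x) = h(x) for all x in the affine span of F. -/
open Finset
open scoped Classical

noncomputable section

/-- Dot product on `Fin d → ℝ`. -/
def dotp {d : ℕ} (a x : Fin d → ℝ) : ℝ := ∑ i, a i * x i

/-- An (affine) linear function `x ↦ a ⬝ x + b`. -/
def IsAffineFn {d : ℕ} (g : (Fin d → ℝ) → ℝ) : Prop :=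
  ∃ (a : Fin d → ℝ) (b : ℝ), ∀ x, g x = dotp a x + b

/-- A closed domain: the closure of a nonempty open set. -/
def IsClosedDomain {d : ℕ} (q : Set (Fin d → ℝ)) : Prop :=
  ∃ U : Set (Fin d → ℝ), IsOpen U ∧ U.Nonempty ∧ q = closure U

/-- `f` is piecewise linear on `Γ`: a finite family of closed domains covers `Γ`
and `f` agrees with an affine function on each of them. -/
def IsPWLOn {d : ℕ} (Γ : Set (Fin d → ℝ)) (f : (Fin d → ℝ) → ℝ) : Prop :=
  ∃ 𝒬 : Finset (Set (Fin d → ℝ)),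
    (∀ q ∈ 𝒬, IsClosedDomain q) ∧ (Γ = ⋃ q ∈ 𝒬, (q : Set (Fin d → ℝ))) ∧
    ∀ q ∈ 𝒬, ∃ g, IsAffineFn g ∧ ∀ x ∈ q, f x = g x

/-- `f` is piecewise linear on `Γ` with all pieces taken from the family `g`. -/
def IsPWLWith {d n : ℕ} (Γ : Set (Fin d → ℝ)) (f : (Fin d → ℝ) → ℝ)
    (g : Fin n → (Fin d → ℝ) → ℝ) : Prop :=
  ∃ 𝒬 : Finset (Set (Fin d → ℝ)),
    (∀ q ∈ 𝒬, IsClosedDomain q) ∧ (Γ = ⋃ q ∈ 𝒬, (q : Set (Fin d → ℝ))) ∧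
    ∀ q ∈ 𝒬, ∃ i, ∀ x ∈ q, f x = g i x

/-- The hyperplane `h` (a pair `(a, b)` encoding `{x | a ⬝ x = b}`) separates `P` and `Q`:
they lie in opposite open halfspaces. -/
def SepH {d : ℕ} (h : (Fin d → ℝ) × ℝ) (P Q : Set (Fin d → ℝ)) : Prop :=
  ((∀ x ∈ P, dotp h.1 x < h.2) ∧ (∀ x ∈ Q, h.2 < dotp h.1 x)) ∨
  ((∀ x ∈ P, h.2 < dotp h.1 x) ∧ (∀ x ∈ Q, dotp h.1 x < h.2))

/-- The separation set `S(P,Q)`: hyperplanes of `H` separating `P` and `Q`. -/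
def sepSet {d : ℕ} (H : Finset ((Fin d → ℝ) × ℝ)) (P Q : Set (Fin d → ℝ)) :
    Finset ((Fin d → ℝ) × ℝ) :=
  H.filter (fun h => SepH h P Q)

/-- The hyperplane encoded by the pair `h = (a, b)`. -/
def hypSet {d : ℕ} (h : (Fin d → ℝ) × ℝ) : Set (Fin d → ℝ) := {x | dotp h.1 x = h.2}

/-- The union of the hyperplanes of the arrangement `H`. -/
def hypUnion {d : ℕ} (H : Finset ((Fin d → ℝ) × ℝ)) : Set (Fin d → ℝ) :=
  ⋃ h ∈ H, hypSet h

/-- The regions determined by a set `C`: the connected components of `C`. -/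
def regionsOf {d : ℕ} (C : Set (Fin d → ℝ)) : Set (Set (Fin d → ℝ)) :=
  {P | ∃ x ∈ C, P = connectedComponentIn C x}

/-- The complement (inside `interior Γ`) of the arrangement associated with the
family of components `g`: points where all the `g i` take pairwise distinct values. -/
def armCompl {d n : ℕ} (Γ : Set (Fin d → ℝ)) (g : Fin n → (Fin d → ℝ) → ℝ) :
    Set (Fin d → ℝ) :=
  {x | x ∈ interior Γ ∧ ∀ i j : Fin n, i ≠ j → g i x ≠ g j x}

theorem IsAffineFn.exists_affineMap {d : ℕ} {g : (Fin d → ℝ) → ℝ} (hg : IsAffineFn g) :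
    ∃ φ : (Fin d → ℝ) →ᵃ[ℝ] ℝ, ⇑φ = g := by
  obtain ⟨a, b, hab⟩ := hg
  refine ⟨(dotProductBilin ℝ ℝ a).toAffineMap + AffineMap.const ℝ _ b, funext fun x => ?_⟩
  simp [hab, dotp, dotProduct]

theorem affine_eq_on_affineSpan_facet_general {d : ℕ} {P Q : Set (Fin d → ℝ)}
    {f g h : (Fin d → ℝ) → ℝ}
    (hg : IsAffineFn g) (hh : IsAffineFn h)
    (hf : ContinuousOn f (closure P ∪ closure Q))
    (hfg : ∀ x ∈ P, f x = g x) (hfh : ∀ x ∈ Q, f x = h x) :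
    ∀ x ∈ (affineSpan ℝ (closure P ∩ closure Q) : Set (Fin d → ℝ)), g x = h x := by
  obtain ⟨φ, rfl⟩ := hg.exists_affineMap
  obtain ⟨ψ, rfl⟩ := hh.exists_affineMap
  have hfφ : Set.EqOn f φ (closure P) :=
    Set.EqOn.of_subset_closure hfg (hf.mono Set.subset_union_left)
      φ.continuous_of_finiteDimensional.continuousOn subset_closure subset_rfl
  have hfψ : Set.EqOn f ψ (closure Q) :=
    Set.EqOn.of_subset_closure hfh (hf.mono Set.subset_union_right)
      ψ.continuous_of_finiteDimensional.continuousOn subset_closure subset_rfl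
  have hφψ : Set.EqOn φ ψ (closure P ∩ closure Q) := fun x hx =>
    (hfφ hx.1).symm.trans (hfψ hx.2)
  exact fun x hx => AffineMap.eqOn_affineSpan hφψ hx

/-- if a continuous function agrees with affine `g` on a region `P` and with
affine `h` on an adjacent region `Q`, then `g = h` on the affine span of the common facet
`F = closure P ∩ closure Q`. -/
theorem affine_eq_on_affineSpan_facet {d : ℕ} {P Q : Set (Fin d → ℝ)}
    (hPo : IsOpen P) (hQo : IsOpen Q) {f g h : (Fin d → ℝ) → ℝ}
    (hg : IsAffineFn g) (hh : IsAffineFn h)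
    (hf : ContinuousOn f (closure P ∪ closure Q))
    (hfg : ∀ x ∈ P, f x = g x) (hfh : ∀ x ∈ Q, f x = h x) :
    ∀ x ∈ (affineSpan ℝ (closure P ∩ closure Q) : Set (Fin d → ℝ)), g x = h x :=
  affine_eq_on_affineSpan_facet_general hg hh hf hfg hfh
end
end

section
/- Let f be a piecewise linear function on a closed convex domain Γ ⊆ ℝ^d with distinct components g_1, …, g_n, and let P, Q be regions of the associated arrangement T. Then there exists an index k such that g_k(x) ≤ f(x) for all x ∈ P and g_k(x) ≥ f(x) for all x ∈ Q. -/
open Finset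
open scoped Classical

noncomputable section

/-- An affine function is continuous. -/
lemma IsAffineFn.continuous {d : ℕ} {g : (Fin d → ℝ) → ℝ} (hg : IsAffineFn g) :
    Continuous g := by
  obtain ⟨a, b, hab⟩ := hg
  have : g = fun x => (∑ i, a i * x i) + b := by
    funext x; simp [hab x, dotp]
  rw [this]
  exact (continuous_finset_sum _ fun i _ => (continuous_const.mul (continuous_apply i))).add
    continuous_const

/-- One-dimensional key lemma: if `φ` is continuous on `[0,1]` and at every point agrees
with one of the affine functions `t ↦ A i + B i * t`, then some `k` satisfies
`A k ≤ φ 0` and `φ 1 ≤ A k + B k`. -/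
lemma onedim {n : ℕ} (φ : ℝ → ℝ) (hφ : ContinuousOn φ (Set.Icc 0 1))
    (A B : Fin n → ℝ)
    (hsel : ∀ t ∈ Set.Icc (0:ℝ) 1, ∃ i, φ t = A i + B i * t) :
    ∃ k, A k ≤ φ 0 ∧ φ 1 ≤ A k + B k := by
  by_contra hcon
  push_neg at hcon
  set γ : Fin n → ℝ → ℝ := fun i t => A i + B i * t with hγ
  set S : Finset (Fin n) := Finset.univ.filter (fun i => A i ≤ φ 0) with hS
  -- the set where φ is below some γ i, i ∈ S
  set T : Set ℝ := ⋃ i ∈ S, (Set.Icc (0:ℝ) 1 ∩ (fun t => φ t - γ i t) ⁻¹' Set.Iic 0) with hT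
  have hTsub : T ⊆ Set.Icc (0:ℝ) 1 := by
    intro t ht
    simp only [hT, Set.mem_iUnion, Set.mem_inter_iff] at ht
    obtain ⟨i, _, hi, _⟩ := ht
    exact hi
  have hTclosed : IsClosed T := by
    apply Set.Finite.isClosed_biUnion (S : Set (Fin n)).toFinite
    intro i _
    exact ((hφ.sub ((continuous_const.add (continuous_const.mul continuous_id)).continuousOn)).preimage_isClosed_of_isClosed
      isClosed_Icc isClosed_Iic)
  have h0mem : (0:ℝ) ∈ Set.Icc (0:ℝ) 1 := ⟨le_refl _, zero_le_one⟩
  have h0T : (0:ℝ) ∈ T := by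
    obtain ⟨i₀, hi₀⟩ := hsel 0 h0mem
    have hA : A i₀ = φ 0 := by rw [hi₀]; ring
    have hi₀S : i₀ ∈ S := by simp [hS, hA.le]
    simp only [hT, Set.mem_iUnion]
    exact ⟨i₀, hi₀S, h0mem, by simp [hγ, hi₀]⟩
  have hbdd : BddAbove T := ⟨1, fun t ht => (hTsub ht).2⟩
  set ts : ℝ := sSup T with hts
  have htsT : ts ∈ T := hTclosed.csSup_mem ⟨0, h0T⟩ hbdd
  obtain ⟨is, hisS, htsIcc, hts_le⟩ : ∃ i ∈ S, ts ∈ Set.Icc (0:ℝ) 1 ∧ φ ts ≤ γ i ts := by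
    simp only [hT, Set.mem_iUnion, Set.mem_inter_iff, Set.mem_preimage, Set.mem_Iic] at htsT
    obtain ⟨i, hiS, hIcc, hle⟩ := htsT
    exact ⟨i, hiS, hIcc, by linarith⟩
  have h1T : (1:ℝ) ∉ T := by
    intro h1
    simp only [hT, Set.mem_iUnion, Set.mem_inter_iff, Set.mem_preimage, Set.mem_Iic] at h1
    obtain ⟨i, hiS, _, hle⟩ := h1
    have hAi : A i ≤ φ 0 := by simpa [hS] using hiS
    have := hcon i hAi
    simp only [hγ] at hle
    nlinarith
  have hts1 : ts < 1 := lt_of_le_of_ne htsIcc.2 (fun e => h1T (e ▸ htsT))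
  have hts0 : 0 ≤ ts := htsIcc.1
  have hIoc : ∀ t ∈ Set.Ioc ts 1, ∀ i ∈ S, γ i t < φ t := by
    intro t ht i hi
    by_contra hle
    push_neg at hle
    have htT : t ∈ T := by
      simp only [hT, Set.mem_iUnion, Set.mem_inter_iff, Set.mem_preimage, Set.mem_Iic]
      exact ⟨i, hi, ⟨le_trans hts0 ht.1.le, ht.2⟩, by linarith⟩
    exact absurd (le_csSup hbdd htT) (not_le.2 ht.1)
  set Bset : Fin n → Set ℝ :=
    fun j => Set.Icc (0:ℝ) 1 ∩ (fun t => φ t - γ j t) ⁻¹' ({0} : Set ℝ) with hBset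
  have hBclosed : ∀ j, IsClosed (Bset j) := by
    intro j
    exact ((hφ.sub ((continuous_const.add (continuous_const.mul continuous_id)).continuousOn)).preimage_isClosed_of_isClosed
      isClosed_Icc isClosed_singleton)
  have hsub : Set.Ioc ts 1 ⊆ ⋃ j ∈ Finset.univ \ S, (Bset j ∩ Set.Ioc ts 1) := by
    intro t ht
    have htIcc : t ∈ Set.Icc (0:ℝ) 1 := ⟨le_trans hts0 ht.1.le, ht.2⟩
    obtain ⟨j, hj⟩ := hsel t htIcc
    have hjS : j ∉ S := by
      intro hjmem
      have := hIoc t ht j hjmem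
      simp only [hγ] at this
      linarith [hj ▸ this]
    simp only [Set.mem_iUnion]
    exact ⟨j, by simp [hjS], ⟨htIcc, by simp [hBset, hγ, hj]⟩, ht⟩
  have hclts : ts ∈ closure (Set.Ioc ts 1) := by
    rw [closure_Ioc (ne_of_lt hts1)]
    exact ⟨le_refl _, hts1.le⟩
  have hclU : ts ∈ ⋃ j ∈ Finset.univ \ S, closure (Bset j ∩ Set.Ioc ts 1) := by
    rw [← Finset.closure_biUnion]
    exact closure_mono hsub hclts
  simp only [Set.mem_iUnion] at hclU
  obtain ⟨j, hjS', hjcl⟩ := hclU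
  have hjS : j ∉ S := by simpa using hjS'
  have htsBj : ts ∈ Bset j :=
    (hBclosed j).closure_subset (closure_mono Set.inter_subset_left hjcl)
  have hφts : φ ts = γ j ts := by
    have := htsBj.2
    simp only [Set.mem_preimage, Set.mem_singleton_iff] at this
    linarith
  obtain ⟨t₀, ht₀B, ht₀Ioc⟩ : ∃ t₀, t₀ ∈ Bset j ∧ t₀ ∈ Set.Ioc ts 1 := by
    obtain ⟨t₀, ht₀⟩ := closure_nonempty_iff.mp ⟨ts, hjcl⟩
    exact ⟨t₀, ht₀.1, ht₀.2⟩
  have hφt₀ : φ t₀ = γ j t₀ := by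
    have := ht₀B.2
    simp only [Set.mem_preimage, Set.mem_singleton_iff] at this
    linarith
  have hAj : φ 0 < A j := by
    by_contra hle
    push_neg at hle
    exact hjS (by simp [hS, hle])
  have hAis : A is ≤ φ 0 := by simpa [hS] using hisS
  have h1' : γ j ts ≤ γ is ts := hφts ▸ hts_le
  have h2' : γ is t₀ < γ j t₀ := hφt₀ ▸ hIoc t₀ ht₀Ioc is hisS
  -- affine contradiction
  set a : ℝ := A j - A is with ha
  set b : ℝ := B j - B is with hb
  have ha0 : 0 < a := by simp only [ha]; linarith
  have hats : a + b * ts ≤ 0 := by simp only [ha, hb, hγ] at h1' ⊢; ring_nf; ring_nf at h1'; nlinarith [h1']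
  have hat₀ : 0 < a + b * t₀ := by simp only [ha, hb, hγ] at h2' ⊢; nlinarith [h2']
  have htlt : ts < t₀ := ht₀Ioc.1
  rcases le_or_gt b 0 with hble | hbgt
  · nlinarith [mul_le_mul_of_nonpos_left htlt.le hble]
  · nlinarith [mul_nonneg hbgt.le hts0]

/-- On a region of the arrangement, `f` agrees with a single component. -/
lemma component_on_region {d n : ℕ} {Γ : Set (Fin d → ℝ)}
    {f : (Fin d → ℝ) → ℝ} {g : Fin n → (Fin d → ℝ) → ℝ}
    (hcont : ContinuousOn f Γ) (hgc : ∀ i, Continuous (g i))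
    (hptwise : ∀ x ∈ Γ, ∃ i, f x = g i x)
    {P : Set (Fin d → ℝ)} {x₀ : Fin d → ℝ} (hx₀ : x₀ ∈ armCompl Γ g)
    (hPdef : P = connectedComponentIn (armCompl Γ g) x₀) :
    ∃ a, ∀ x ∈ P, f x = g a x := by
  have hPsub : P ⊆ armCompl Γ g := hPdef ▸ connectedComponentIn_subset _ _
  have hPΓ : P ⊆ Γ := fun x hx => interior_subset (hPsub hx).1
  have hxP : x₀ ∈ P := hPdef ▸ mem_connectedComponentIn hx₀
  have hPconn : IsPreconnected P :=
    hPdef ▸ (isConnected_connectedComponentIn_iff.mpr hx₀).isPreconnected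
  haveI : PreconnectedSpace ↥P := Subtype.preconnectedSpace hPconn
  obtain ⟨a, ha⟩ := hptwise x₀ (hPΓ hxP)
  set C : Fin n → Set ↥P := fun i => {y : ↥P | f ↑y = g i ↑y} with hC
  have hfP : Continuous (fun y : ↥P => f ↑y) := (hcont.mono hPΓ).restrict
  have hCc : ∀ i, IsClosed (C i) := by
    intro i
    have : C i = (fun y : ↥P => f ↑y - g i ↑y) ⁻¹' ({0} : Set ℝ) := by
      ext y; simp [hC, sub_eq_zero]
    rw [this]
    exact IsClosed.preimage (hfP.sub ((hgc i).comp continuous_subtype_val))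
      isClosed_singleton
  have hcompl : (C a)ᶜ = ⋃ i, (if i = a then (∅ : Set ↥P) else C i) := by
    ext y
    simp only [Set.mem_compl_iff, Set.mem_iUnion, hC, Set.mem_setOf_eq]
    constructor
    · intro hy
      obtain ⟨i, hi⟩ := hptwise ↑y (hPΓ y.2)
      have hia : i ≠ a := fun e => hy (e ▸ hi)
      exact ⟨i, by simp [hia, hi]⟩
    · rintro ⟨i, hi⟩
      by_cases e : i = a
      · simp [e] at hi
      · simp only [e, if_neg, ite_false] at hi
        have hne : g i ↑y ≠ g a ↑y := (hPsub y.2).2 i a e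
        simp only [hC, Set.mem_setOf_eq] at hi
        rw [hi]; exact hne
  have hclopen : IsClopen (C a) := by
    constructor
    · exact hCc a
    · rw [← isClosed_compl_iff, hcompl]
      apply isClosed_iUnion_of_finite
      intro i
      by_cases e : i = a <;> simp [e, hCc i]
  have huniv : C a = Set.univ :=
    hclopen.eq_univ ⟨⟨x₀, hxP⟩, ha⟩
  refine ⟨a, fun x hx => ?_⟩
  have : (⟨x, hx⟩ : ↥P) ∈ C a := huniv ▸ Set.mem_univ _
  exact this

/-- Sign constancy on a preconnected subset of the arrangement complement. -/
lemma sign_constant {d n : ℕ} {Γ : Set (Fin d → ℝ)} {g : Fin n → (Fin d → ℝ) → ℝ}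
    (hgc : ∀ i, Continuous (g i)) {S : Set (Fin d → ℝ)} (hS : IsPreconnected S)
    (hsub : S ⊆ armCompl Γ g) {i j : Fin n} (hij : i ≠ j) {p x : Fin d → ℝ}
    (hp : p ∈ S) (hx : x ∈ S) (h : g i p < g j p) : g i x < g j x := by
  by_contra hle
  push_neg at hle
  have hne : g i x ≠ g j x := (hsub hx).2 i j hij
  have hlt : g j x < g i x := lt_of_le_of_ne hle (Ne.symm hne)
  have hIVT := hS.intermediate_value hp hx
    (Continuous.continuousOn ((hgc i).sub (hgc j)))
  have h0 : (0:ℝ) ∈ Set.Icc (g i p - g j p) (g i x - g j x) :=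
    ⟨by linarith, by linarith⟩
  obtain ⟨y, hyS, hy⟩ := hIVT h0
  exact (hsub hyS).2 i j hij (by linarith [sub_eq_zero.mp hy])

/-- key lemma: for any two regions `P, Q` of the arrangement associated with
a piecewise linear function `f`, some component `g k` satisfies `g k ≤ f` on `P` and
`g k ≥ f` on `Q`. -/
theorem key_lemma {d n : ℕ} {Γ : Set (Fin d → ℝ)} (hΓc : IsClosed Γ) (hΓv : Convex ℝ Γ)
    {f : (Fin d → ℝ) → ℝ} {g : Fin n → (Fin d → ℝ) → ℝ}
    (hga : ∀ i, IsAffineFn (g i)) (hgd : Function.Injective g)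
    (hf : IsPWLWith Γ f g)
    {P Q : Set (Fin d → ℝ)}
    (hP : P ∈ regionsOf (armCompl Γ g)) (hQ : Q ∈ regionsOf (armCompl Γ g)) :
    ∃ k, (∀ x ∈ P, g k x ≤ f x) ∧ (∀ x ∈ Q, f x ≤ g k x) := by
  obtain ⟨𝒬, h𝒬dom, h𝒬cov, h𝒬aff⟩ := hf
  have hgc : ∀ i, Continuous (g i) := fun i => (hga i).continuous
  -- f is continuous on Γ
  have hcont : ContinuousOn f Γ := by
    rw [h𝒬cov, ← Set.iUnion_subtype (fun q => q ∈ 𝒬) (fun q => (q.1 : Set (Fin d → ℝ)))]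
    apply LocallyFinite.continuousOn_iUnion (locallyFinite_of_finite _)
    · rintro ⟨q, hq⟩
      obtain ⟨U, _, _, hU⟩ := h𝒬dom q hq
      exact hU ▸ isClosed_closure
    · rintro ⟨q, hq⟩
      obtain ⟨i, hi⟩ := h𝒬aff q hq
      exact ((hgc i).continuousOn).congr hi
  -- pointwise selection
  have hptwise : ∀ x ∈ Γ, ∃ i, f x = g i x := by
    intro x hx
    rw [h𝒬cov] at hx
    simp only [Set.mem_iUnion] at hx
    obtain ⟨q, hq, hxq⟩ := hx
    obtain ⟨i, hi⟩ := h𝒬aff q hq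
    exact ⟨i, hi x hxq⟩
  obtain ⟨p₀, hp₀, hPdef⟩ := hP
  obtain ⟨q₀, hq₀, hQdef⟩ := hQ
  have hPsub : P ⊆ armCompl Γ g := hPdef ▸ connectedComponentIn_subset _ _
  have hQsub : Q ⊆ armCompl Γ g := hQdef ▸ connectedComponentIn_subset _ _
  have hPΓ : P ⊆ Γ := fun x hx => interior_subset (hPsub hx).1
  have hQΓ : Q ⊆ Γ := fun x hx => interior_subset (hQsub hx).1
  have hpP : p₀ ∈ P := hPdef ▸ mem_connectedComponentIn hp₀
  have hqQ : q₀ ∈ Q := hQdef ▸ mem_connectedComponentIn hq₀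
  have hPconn : IsPreconnected P :=
    hPdef ▸ (isConnected_connectedComponentIn_iff.mpr hp₀).isPreconnected
  have hQconn : IsPreconnected Q :=
    hQdef ▸ (isConnected_connectedComponentIn_iff.mpr hq₀).isPreconnected
  obtain ⟨a, hfa⟩ := component_on_region hcont hgc hptwise hp₀ hPdef
  obtain ⟨b, hfb⟩ := component_on_region hcont hgc hptwise hq₀ hQdef
  -- the segment from p₀ to q₀
  set c : ℝ → (Fin d → ℝ) := fun t => fun i => p₀ i + t * (q₀ i - p₀ i) with hc
  have hc0 : c 0 = p₀ := by funext i; simp [hc]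
  have hc1 : c 1 = q₀ := by funext i; simp [hc]
  have hcΓ : ∀ t ∈ Set.Icc (0:ℝ) 1, c t ∈ Γ := by
    intro t ht
    have : c t = (1 - t) • p₀ + t • q₀ := by
      funext i
      simp only [hc, Pi.add_apply, Pi.smul_apply, smul_eq_mul]
      ring
    rw [this]
    exact hΓv (hPΓ hpP) (hQΓ hqQ) (by linarith [ht.2]) ht.1 (by ring)
  have hccont : Continuous c := by
    apply continuous_pi
    intro i
    exact continuous_const.add (continuous_id.mul continuous_const)
  set φ : ℝ → ℝ := fun t => f (c t) with hφdef
  have hφcont : ContinuousOn φ (Set.Icc 0 1) :=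
    hcont.comp hccont.continuousOn hcΓ
  set A : Fin n → ℝ := fun i => g i p₀ with hA
  set B : Fin n → ℝ := fun i => g i q₀ - g i p₀ with hB
  have haff : ∀ i t, g i (c t) = A i + B i * t := by
    intro i t
    obtain ⟨v, w, hv⟩ := hga i
    simp only [hA, hB, hv, dotp, hc]
    have e1 : ∑ j, v j * (p₀ j + t * (q₀ j - p₀ j))
        = ∑ j, (v j * p₀ j + t * (v j * q₀ j - v j * p₀ j)) := by
      apply Finset.sum_congr rfl; intro j _; ring
    rw [e1, Finset.sum_add_distrib, ← Finset.mul_sum, Finset.sum_sub_distrib]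
    ring
  have hsel : ∀ t ∈ Set.Icc (0:ℝ) 1, ∃ i, φ t = A i + B i * t := by
    intro t ht
    obtain ⟨i, hi⟩ := hptwise (c t) (hcΓ t ht)
    exact ⟨i, by rw [hφdef]; simp only; rw [hi, haff]⟩
  obtain ⟨k, hk0, hk1⟩ := onedim φ hφcont A B hsel
  have hkp : g k p₀ ≤ f p₀ := by
    have : φ 0 = f p₀ := by rw [hφdef]; simp only; rw [hc0]
    rw [← this]; exact hk0
  have hkq : f q₀ ≤ g k q₀ := by
    have h1 : φ 1 = f q₀ := by rw [hφdef]; simp only; rw [hc1]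
    have h2 : A k + B k = g k q₀ := by simp [hA, hB]
    rw [← h1, ← h2]; exact hk1
  refine ⟨k, ?_, ?_⟩
  · intro x hx
    rw [hfa x hx]
    by_cases e : k = a
    · exact le_of_eq (by rw [e])
    · have hlt : g k p₀ < g a p₀ :=
        lt_of_le_of_ne (by rw [← hfa p₀ hpP]; exact hkp) ((hPsub hpP).2 k a e)
      exact (sign_constant hgc hPconn hPsub e hpP hx hlt).le
  · intro x hx
    rw [hfb x hx]
    by_cases e : b = k
    · exact le_of_eq (by rw [e])
    · have hlt : g b q₀ < g k q₀ :=
        lt_of_le_of_ne (by rw [← hfb q₀ hqQ]; exact hkq) ((hQsub hqQ).2 b k e)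
      exact (sign_constant hgc hQconn hQsub e hqQ hx hlt).le
end
end

section
/- Let f be a piecewise linear function on a closed convex domain Γ ⊆ ℝ^d with distinct affine components g_1, …, g_n. Then there exists a finite family {S_j}_{j∈J} of subsets of {1,…,n} such that f(x) = max_{j∈J} min_{i∈S_j} g_i(x) for all x ∈ Γ. -/
open Finset
open scoped Classical

noncomputable section

/-! Ovchinnikov's argument. For `x, y ∈ Γ`, follow `f` along the segment from `x` to `y`: a
continuous induction over the pieces met on the way produces a component `g i` with
`g i x ≤ f x` and `f y ≤ g i y`. Hence for `S_y = {i | f y ≤ g i y}` the minimum of the `g i`,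
`i ∈ S_y`, lies below `f` on all of `Γ` and equals `f` at `y`, so `f` is the maximum of these
finitely many minima. -/

open Topology

theorem exists_le_le_of_piecewise_affine_Icc {ι : Type*} [Finite ι] {C : ι → Set ℝ}
    (hC : ∀ i, IsClosed (C i)) (hcov : Set.Icc 0 1 ⊆ ⋃ i, C i) {φ : ℝ → ℝ} {c s : ι → ℝ}
    (hφ : ∀ i, ∀ t ∈ C i, φ t = c i + s i * t) :
    ∃ i, c i ≤ φ 0 ∧ φ 1 ≤ c i + s i := by
  set T : Set ℝ := ⋃ i ∈ {i | c i ≤ φ 0}, ⋃ j, C j ∩ {t | c j + s j * t ≤ c i + s i * t}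
  have mem_T {t : ℝ} :
      t ∈ T ↔ ∃ i, c i ≤ φ 0 ∧ ∃ j, t ∈ C j ∧ c j + s j * t ≤ c i + s i * t := by
    simp [T]
  have hT : IsClosed T := (Set.toFinite _).isClosed_biUnion fun i _ =>
    isClosed_iUnion_of_finite fun j => (hC j).inter (isClosed_le (by fun_prop) (by fun_prop))
  have h0 : (0 : ℝ) ∈ T := by
    obtain ⟨j, h0j⟩ := Set.mem_iUnion.1 (hcov ⟨le_rfl, zero_le_one⟩)
    exact mem_T.2 ⟨j, by simp [hφ j 0 h0j], j, h0j, le_rfl⟩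
  have hstep : ∀ x ∈ T ∩ Set.Ico 0 1, T ∈ 𝓝[>] x := by
    rintro x ⟨hxT, hx0, hx1⟩
    obtain ⟨i, hi, j, hxj, hji⟩ := mem_T.1 hxT
    filter_upwards [nhdsWithin_le_nhds ((locallyFinite_of_finite C).eventually_subset hC x),
      Ioo_mem_nhdsGT hx1] with t hloc ht
    obtain ⟨k, htk⟩ := Set.mem_iUnion.1 (hcov ⟨hx0.trans ht.1.le, ht.2.le⟩)
    have hki : c k + s k * x ≤ c i + s i * x := by
      rw [← hφ k x (hloc htk), hφ j x hxj]; exact hji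
    by_cases hkit : c k + s k * t ≤ c i + s i * t
    · exact mem_T.2 ⟨i, hi, k, htk, hkit⟩
    -- the line of piece `k` crosses that of `i` upwards between `x` and `t`, so lies below it at `0`
    have hs : s i < s k := by nlinarith [ht.1]
    have hk : c k ≤ c i := by nlinarith [mul_nonneg (sub_nonneg.2 hs.le) hx0]
    exact mem_T.2 ⟨k, hk.trans hi, k, htk, le_rfl⟩
  obtain ⟨i, hi, j, h1j, hji⟩ :=
    mem_T.1 ((hT.inter isClosed_Icc).Icc_subset_of_forall_mem_nhdsWithin h0 hstep
      ⟨zero_le_one, le_rfl⟩)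
  exact ⟨i, hi, by simpa [hφ j 1 h1j] using hji⟩

theorem IsClosedDomain.isClosed {d : ℕ} {q : Set (Fin d → ℝ)} (hq : IsClosedDomain q) :
    IsClosed q := by
  obtain ⟨U, -, -, rfl⟩ := hq
  exact isClosed_closure

theorem IsAffineFn.apply_lineMap {d : ℕ} {g : (Fin d → ℝ) → ℝ} (hg : IsAffineFn g)
    (x y : Fin d → ℝ) (t : ℝ) :
    g (AffineMap.lineMap x y t) = g x + (g y - g x) * t := by
  obtain ⟨a, b, hab⟩ := hg
  have hdot (z : Fin d → ℝ) : dotp a z = a ⬝ᵥ z := rfl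
  simp only [hab, hdot, AffineMap.lineMap_apply_module, dotProduct_add, dotProduct_smul,
    smul_eq_mul]
  ring

theorem IsPWLWith.exists_le_le {d n : ℕ} {Γ : Set (Fin d → ℝ)} {f : (Fin d → ℝ) → ℝ}
    {g : Fin n → (Fin d → ℝ) → ℝ} (hf : IsPWLWith Γ f g) (hΓ : Convex ℝ Γ)
    (hg : ∀ i, IsAffineFn (g i)) {x y : Fin d → ℝ} (hx : x ∈ Γ) (hy : y ∈ Γ) :
    ∃ i, g i x ≤ f x ∧ f y ≤ g i y := by
  obtain ⟨𝒬, hdom, hcov, hpiece⟩ := hf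
  choose idx hidx using hpiece
  let γ : ℝ → Fin d → ℝ := AffineMap.lineMap x y
  let c (q : 𝒬) : ℝ := g (idx q q.2) x
  let s (q : 𝒬) : ℝ := g (idx q q.2) y - g (idx q q.2) x
  have hC (q : 𝒬) : IsClosed (γ ⁻¹' q) :=
    (hdom q q.2).isClosed.preimage AffineMap.lineMap_continuous
  have hsegment : Set.Icc 0 1 ⊆ ⋃ q : 𝒬, γ ⁻¹' q := by
    intro t ht
    obtain ⟨q, hq, hγt⟩ := Set.mem_iUnion₂.1 (hcov ▸ hΓ.lineMap_mem hx hy ht)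
    exact Set.mem_iUnion.2 ⟨⟨q, hq⟩, hγt⟩
  have hφ (q : 𝒬) (t : ℝ) (ht : t ∈ γ ⁻¹' q) : f (γ t) = c q + s q * t := by
    rw [hidx q q.2 _ ht, (hg _).apply_lineMap]
  obtain ⟨q, hq0, hq1⟩ := exists_le_le_of_piecewise_affine_Icc hC hsegment hφ
  simp only [γ, AffineMap.lineMap_apply_zero, AffineMap.lineMap_apply_one, c, s] at hq0 hq1
  exact ⟨idx q q.2, hq0, by linarith⟩

theorem exists_sup'_inf'_eq_of_exists_le_le {X ι α : Type*} [Fintype ι] [LinearOrder α]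
    {Γ : Set X} (hΓ : Γ.Nonempty) {f : X → α} {g : ι → X → α}
    (h : ∀ x ∈ Γ, ∀ y ∈ Γ, ∃ i, g i x ≤ f x ∧ f y ≤ g i y) :
    ∃ (m : ℕ) (hm : 0 < m) (S : Fin m → Finset ι) (hS : ∀ j, (S j).Nonempty),
      ∀ x ∈ Γ, f x = univ.sup' ⟨⟨0, hm⟩, mem_univ _⟩ (fun j => (S j).inf' (hS j) (g · x)) := by
  let above (y : X) : Finset ι := univ.filter fun i => f y ≤ g i y
  obtain ⟨m, ⟨e⟩⟩ := Finite.exists_equiv_fin (above '' Γ)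
  have hS (j : Fin m) : ∃ y ∈ Γ, above y = e.symm j := (e.symm j).2
  have hSne (j : Fin m) : (e.symm j : Finset ι).Nonempty := by
    obtain ⟨y, hy, hyj⟩ := hS j
    obtain ⟨i, -, hi⟩ := h y hy y hy
    exact ⟨i, hyj ▸ mem_filter.2 ⟨mem_univ i, hi⟩⟩
  obtain ⟨y₀, hy₀⟩ := hΓ
  have hm : 0 < m := (e ⟨above y₀, y₀, hy₀, rfl⟩).pos
  refine ⟨m, hm, fun j => e.symm j, hSne, fun x hx => le_antisymm ?_ ?_⟩
  · refine le_sup'_of_le _ (mem_univ (e ⟨above x, x, hx, rfl⟩)) (le_inf' _ _ fun i hi => ?_)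
    simp only [Equiv.symm_apply_apply] at hi
    exact (mem_filter.1 hi).2
  · refine sup'_le _ _ fun j _ => ?_
    obtain ⟨y, hy, hyj⟩ := hS j
    obtain ⟨i, hix, hiy⟩ := h x hx y hy
    have hij : i ∈ (e.symm j : Finset ι) := hyj ▸ mem_filter.2 ⟨mem_univ i, hiy⟩
    exact (inf'_le _ hij).trans hix

theorem pwl_max_min_representation_general {d n : ℕ} (hn : 0 < n)
    {Γ : Set (Fin d → ℝ)} (hΓv : Convex ℝ Γ)
    {f : (Fin d → ℝ) → ℝ} {g : Fin n → (Fin d → ℝ) → ℝ}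
    (hga : ∀ i, IsAffineFn (g i))
    (hf : IsPWLWith Γ f g) :
    ∃ (m : ℕ) (hm : 0 < m) (S : Fin m → Finset (Fin n)) (hS : ∀ j, (S j).Nonempty),
      ∀ x ∈ Γ, f x =
        Finset.univ.sup' ⟨⟨0, hm⟩, Finset.mem_univ _⟩
          (fun j => (S j).inf' (hS j) (fun i => g i x)) := by
  rcases Γ.eq_empty_or_nonempty with rfl | hΓ
  · exact ⟨1, one_pos, fun _ => {⟨0, hn⟩}, fun _ => singleton_nonempty _, by simp⟩
  exact exists_sup'_inf'_eq_of_exists_le_le hΓ fun x hx y hy => hf.exists_le_le hΓv hga hx hy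

/-- main theorem, part (a): every piecewise linear function on a closed
convex domain is a max–min polynomial of its components. -/
theorem pwl_max_min_representation {d n : ℕ} (hn : 0 < n)
    {Γ : Set (Fin d → ℝ)} (hΓc : IsClosed Γ) (hΓv : Convex ℝ Γ)
    {f : (Fin d → ℝ) → ℝ} {g : Fin n → (Fin d → ℝ) → ℝ}
    (hga : ∀ i, IsAffineFn (g i)) (hgd : Function.Injective g)
    (hf : IsPWLWith Γ f g) :
    ∃ (m : ℕ) (hm : 0 < m) (S : Fin m → Finset (Fin n)) (hS : ∀ j, (S j).Nonempty),
      ∀ x ∈ Γ, f x =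
        Finset.univ.sup' ⟨⟨0, hm⟩, Finset.mem_univ _⟩
          (fun j => (S j).inf' (hS j) (fun i => g i x)) :=
  pwl_max_min_representation_general hn hΓv hga hf
end
end

section
/- Let g_1, …, g_n be affine functions on ℝ^d and let Q be a connected open set on which g_i(x) ≠ g_j(x) for all i ≠ j and all x ∈ Q. Then for any family {S_j}_{j∈J} of nonempty subsets of {1,…,n}, there exists an index i such that max_{j∈J} min_{k∈S_j} g_k(x) = g_i(x) for all x ∈ Q. -/
open Finset
open scoped Classical

noncomputable section

/-- on a connected open set where the affine functions take pairwise distinct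
values, any max–min polynomial of them coincides with a single one of them. -/
theorem max_min_eq_single_on_region {d n m : ℕ} (g : Fin n → (Fin d → ℝ) → ℝ)
    (hg : ∀ i, IsAffineFn (g i))
    {Q : Set (Fin d → ℝ)} (hQo : IsOpen Q) (hQc : IsConnected Q)
    (hsep : ∀ x ∈ Q, ∀ i j : Fin n, i ≠ j → g i x ≠ g j x)
    (hm : 0 < m) (S : Fin m → Finset (Fin n)) (hS : ∀ j, (S j).Nonempty) :
    ∃ i, ∀ x ∈ Q,
      (Finset.univ.sup' ⟨⟨0, hm⟩, Finset.mem_univ _⟩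
        (fun j => (S j).inf' (hS j) (fun k => g k x))) = g i x := by
  set f : (Fin d → ℝ) → ℝ := fun x => Finset.univ.sup' ⟨⟨0, hm⟩, Finset.mem_univ _⟩
      (fun j => (S j).inf' (hS j) (fun k => g k x)) with hf
  have hgc : ∀ i, Continuous (g i) := by
    intro i
    obtain ⟨a, b, hab⟩ := hg i
    have : Continuous fun x : Fin d → ℝ => dotp a x + b := by
      unfold dotp
      exact (continuous_finset_sum _ fun k _ =>
        continuous_const.mul (continuous_apply k)).add continuous_const
    exact this.congr (fun x => (hab x).symm)
  have hfc : Continuous f :=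
    Continuous.finset_sup'_apply _ fun j _ =>
      Continuous.finset_inf'_apply (hS j) fun k _ => hgc k
  have hex : ∀ x, ∃ k, f x = g k x := by
    intro x
    obtain ⟨j, _, hj⟩ := Finset.exists_mem_eq_sup'
      (⟨⟨0, hm⟩, Finset.mem_univ _⟩ : (Finset.univ : Finset (Fin m)).Nonempty)
      (fun j => (S j).inf' (hS j) (fun k => g k x))
    obtain ⟨k, _, hk⟩ := Finset.exists_mem_eq_inf' (hS j) (fun k => g k x)
    exact ⟨k, by rw [hf]; simpa [hk] using hj⟩
  have huniq : ∀ x ∈ Q, ∀ i j : Fin n, f x = g i x → f x = g j x → i = j := by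
    intro x hx i j hi hj
    by_contra h
    exact hsep x hx i j h (hi ▸ hj)
  obtain ⟨x0, hx0⟩ := hQc.1
  obtain ⟨i0, hi0⟩ := hex x0
  refine ⟨i0, ?_⟩
  by_contra hcon
  push_neg at hcon
  obtain ⟨x1, hx1Q, hx1⟩ := hcon
  set C : Fin n → Set (Fin d → ℝ) := fun i => {x | f x = g i x} with hC
  have hCc : ∀ i, IsClosed (C i) := fun i => isClosed_eq hfc (hgc i)
  set u : Set (Fin d → ℝ) := Q ∩ (⋃ j ∈ Finset.univ.erase i0, C j)ᶜ with hu'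
  set v : Set (Fin d → ℝ) := (C i0)ᶜ with hv'
  have hu : IsOpen u :=
    hQo.inter (isClosed_biUnion_finset fun j _ => hCc j).isOpen_compl
  have hv : IsOpen v := (hCc i0).isOpen_compl
  have hQuv : Q ⊆ u ∪ v := by
    intro x hx
    by_cases hxc : f x = g i0 x
    · left
      refine ⟨hx, ?_⟩
      simp only [Set.mem_compl_iff, Set.mem_iUnion, not_exists]
      intro j hj hjC
      exact (Finset.mem_erase.mp hj).1 (huniq x hx j i0 hjC hxc)
    · right
      exact hxc
  have h1 : (Q ∩ u).Nonempty := by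
    refine ⟨x0, hx0, hx0, ?_⟩
    simp only [Set.mem_compl_iff, Set.mem_iUnion, not_exists]
    intro j hj hjC
    exact (Finset.mem_erase.mp hj).1 (huniq x0 hx0 j i0 hjC hi0)
  have h2 : (Q ∩ v).Nonempty := ⟨x1, hx1Q, hx1⟩
  obtain ⟨y, hyQ, hyu, hyv⟩ := hQc.2 u v hu hv hQuv h1 h2
  obtain ⟨k, hk⟩ := hex y
  have hki0 : k = i0 := by
    by_contra hne
    apply hyu.2
    simp only [Set.mem_iUnion]
    exact ⟨k, ⟨Finset.mem_erase.mpr ⟨hne, Finset.mem_univ _⟩, hk⟩⟩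
  exact hyv (hki0 ▸ hk)
end
end

section
/- Every piecewise linear function on a closed convex domain Γ ⊆ ℝ^d extends to a piecewise linear function on all of ℝ^d. -/
open Finset
open scoped Classical

noncomputable section

set_option linter.unusedSectionVars false
set_option maxHeartbeats 1000000

namespace PWLAux

variable {d : ℕ}

theorem dotp_add (a x y : Fin d → ℝ) : dotp a (x + y) = dotp a x + dotp a y := by
  simp [dotp, mul_add, Finset.sum_add_distrib]

theorem dotp_smul (a : Fin d → ℝ) (t : ℝ) (x : Fin d → ℝ) :
    dotp a (t • x) = t * dotp a x := by
  simp only [dotp, Finset.mul_sum, Pi.smul_apply, smul_eq_mul]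
  exact Finset.sum_congr rfl fun i _ => by ring

theorem dotp_line (a u v : Fin d → ℝ) (t : ℝ) :
    dotp a (u + t • v) = dotp a u + t * dotp a v := by
  rw [dotp_add, dotp_smul]

theorem dotp_combo (a x y : Fin d → ℝ) (s t : ℝ) :
    dotp a (s • x + t • y) = s * dotp a x + t * dotp a y := by
  rw [dotp_add, dotp_smul, dotp_smul]

theorem dotp_sub_left (u v x : Fin d → ℝ) :
    dotp (u - v) x = dotp u x - dotp v x := by
  simp [dotp, sub_mul, Finset.sum_sub_distrib]

theorem dotp_single (a : Fin d → ℝ) (k : Fin d) :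
    dotp a (Pi.single k 1) = a k := by
  rw [dotp, Finset.sum_eq_single k]
  · simp
  · intro i _ hik
    simp [Pi.single_apply, hik]
  · simp

theorem cont_aff (a : Fin d → ℝ) (c : ℝ) : Continuous fun x : Fin d → ℝ => dotp a x + c := by
  unfold dotp
  fun_prop

/-- An affine function nonnegative on an open set and vanishing at a point of it vanishes
identically. -/
theorem aff_nonneg_zero {U : Set (Fin d → ℝ)} (hU : IsOpen U) {w : Fin d → ℝ} (hw : w ∈ U)
    {aa : Fin d → ℝ} {bb : ℝ} (h0 : ∀ x ∈ U, 0 ≤ dotp aa x + bb)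
    (hz : dotp aa w + bb = 0) : ∀ x, dotp aa x + bb = 0 := by
  have hka : ∀ k, aa k = 0 := by
    intro k
    obtain ⟨ε, hε, hball⟩ := Metric.isOpen_iff.1 hU w hw
    set e : Fin d → ℝ := Pi.single k 1 with he
    set δ : ℝ := ε / (2 * (‖e‖ + 1)) with hδ
    have hepos : (0:ℝ) < ‖e‖ + 1 := by positivity
    have hδpos : 0 < δ := by positivity
    have hmem : ∀ s : ℝ, |s| ≤ δ → w + s • e ∈ U := by
      intro s hs
      apply hball
      have : dist (w + s • e) w = ‖s • e‖ := by
        simp [dist_eq_norm]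
      rw [Metric.mem_ball, this, norm_smul, Real.norm_eq_abs]
      calc |s| * ‖e‖ ≤ δ * ‖e‖ := by
            apply mul_le_mul_of_nonneg_right hs (norm_nonneg _)
        _ < ε := by
            rw [hδ]
            rw [div_mul_eq_mul_div, div_lt_iff₀ (by positivity)]
            nlinarith [norm_nonneg e]
    have h1 : 0 ≤ dotp aa (w + δ • e) + bb := h0 _ (hmem δ (by simp [abs_of_pos hδpos]))
    have h2 : 0 ≤ dotp aa (w + (-δ) • e) + bb := h0 _ (hmem (-δ) (by rw [abs_neg, abs_of_pos hδpos]))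
    rw [dotp_line, dotp_single] at h1 h2
    nlinarith
  intro x
  have hx : dotp aa x = 0 := by
    unfold dotp
    apply Finset.sum_eq_zero
    intro i _
    simp [hka i]
  have hwz : dotp aa w = 0 := by
    unfold dotp
    apply Finset.sum_eq_zero
    intro i _
    simp [hka i]
  rw [hx]
  rw [hwz] at hz
  linarith


variable {ι : Type*} [Fintype ι]

/-- The affine function with data `(a i, b i)`. -/
def affA (a : ι → Fin d → ℝ) (b : ι → ℝ) (i : ι) (x : Fin d → ℝ) : ℝ := dotp (a i) x + b i

theorem affA_line (a : ι → Fin d → ℝ) (b : ι → ℝ) (i : ι) (u v : Fin d → ℝ) (t : ℝ) :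
    affA a b i (u + t • v) = affA a b i u + t * dotp (a i) v := by
  simp [affA, dotp_line]; ring

theorem affA_combo (a : ι → Fin d → ℝ) (b : ι → ℝ) (i : ι) (x y : Fin d → ℝ) {s t : ℝ}
    (hst : s + t = 1) : affA a b i (s • x + t • y) = s * affA a b i x + t * affA a b i y := by
  simp only [affA, dotp_combo]
  have h : s * (dotp (a i) x + b i) + t * (dotp (a i) y + b i)
      = s * dotp (a i) x + t * dotp (a i) y + (s + t) * b i := by ring
  rw [h, hst, one_mul]

theorem affA_cont (a : ι → Fin d → ℝ) (b : ι → ℝ) (i : ι) : Continuous (affA a b i) :=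
  cont_aff (a i) (b i)

theorem aff_diff_eq (a : ι → Fin d → ℝ) (b : ι → ℝ) (p q : ι) (x : Fin d → ℝ) :
    affA a b q x - affA a b p x = dotp (a q - a p) x + (b q - b p) := by
  simp [affA, dotp_sub_left]; ring

variable (a : ι → Fin d → ℝ) (b : ι → ℝ)

/-- The closed cell of the arrangement determined by the sign pattern `σ`. -/
def cell (σ : ι → ι → Bool) : Set (Fin d → ℝ) :=
  ⋂ p, ⋂ q, (if σ p q then {x | affA a b p x ≤ affA a b q x}
    else {x | affA a b q x ≤ affA a b p x})

theorem cell_le_of_true {σ : ι → ι → Bool} {p q : ι} (hσ : σ p q = true)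
    {x : Fin d → ℝ} (hx : x ∈ cell a b σ) : affA a b p x ≤ affA a b q x := by
  have := Set.mem_iInter.1 (Set.mem_iInter.1 hx p) q
  rwa [hσ] at this

theorem cell_le_of_false {σ : ι → ι → Bool} {p q : ι} (hσ : σ p q = false)
    {x : Fin d → ℝ} (hx : x ∈ cell a b σ) : affA a b q x ≤ affA a b p x := by
  have := Set.mem_iInter.1 (Set.mem_iInter.1 hx p) q
  rwa [hσ] at this

theorem cell_comp (σ : ι → ι → Bool) (p q : ι) :
    (∀ x ∈ cell a b σ, affA a b p x ≤ affA a b q x) ∨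
    (∀ x ∈ cell a b σ, affA a b q x ≤ affA a b p x) := by
  cases hb : σ p q with
  | true => exact Or.inl fun x hx => cell_le_of_true a b hb hx
  | false => exact Or.inr fun x hx => cell_le_of_false a b hb hx

theorem cell_closed (σ : ι → ι → Bool) : IsClosed (cell a b σ) := by
  apply isClosed_iInter; intro p; apply isClosed_iInter; intro q
  split
  · exact isClosed_le (affA_cont a b p) (affA_cont a b q)
  · exact isClosed_le (affA_cont a b q) (affA_cont a b p)

theorem cell_convex (σ : ι → ι → Bool) : Convex ℝ (cell a b σ) := by
  have hc : ∀ p q : ι, Convex ℝ {x : Fin d → ℝ | affA a b p x ≤ affA a b q x} := by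
    intro p q x hx y hy s t hs ht hst
    simp only [Set.mem_setOf_eq] at *
    rw [affA_combo a b p x y hst, affA_combo a b q x y hst]
    have h1 : s * affA a b p x ≤ s * affA a b q x := mul_le_mul_of_nonneg_left hx hs
    have h2 : t * affA a b p y ≤ t * affA a b q y := mul_le_mul_of_nonneg_left hy ht
    linarith
  apply convex_iInter; intro p; apply convex_iInter; intro q
  split
  · exact hc p q
  · exact hc q p

/-- Two affine pieces agreeing at an interior point of a cell agree globally. -/
theorem eq_on_cell {σ : ι → ι → Bool} {z : Fin d → ℝ} (hz : z ∈ interior (cell a b σ))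
    {p q : ι} (hpq : affA a b p z = affA a b q z) : ∀ u, affA a b p u = affA a b q u := by
  rcases cell_comp a b σ p q with h | h
  · have h0 : ∀ x ∈ interior (cell a b σ), 0 ≤ dotp (a q - a p) x + (b q - b p) := by
      intro x hx
      rw [← aff_diff_eq]
      have := h x (interior_subset hx)
      linarith
    have hz0 : dotp (a q - a p) z + (b q - b p) = 0 := by
      rw [← aff_diff_eq]; linarith
    intro u
    have := aff_nonneg_zero isOpen_interior hz h0 hz0 u
    rw [← aff_diff_eq] at this; linarith
  · have h0 : ∀ x ∈ interior (cell a b σ), 0 ≤ dotp (a p - a q) x + (b p - b q) := by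
      intro x hx
      rw [← aff_diff_eq]
      have := h x (interior_subset hx)
      linarith
    have hz0 : dotp (a p - a q) z + (b p - b q) = 0 := by
      rw [← aff_diff_eq]; linarith
    intro u
    have := aff_nonneg_zero isOpen_interior hz h0 hz0 u
    rw [← aff_diff_eq] at this; linarith

theorem isOpen_imp {X : Type*} [TopologicalSpace X] {P : Prop} {Q : Set X} (hQ : IsOpen Q) :
    IsOpen {w : X | P → w ∈ Q} := by
  by_cases hP : P
  · have : {w : X | P → w ∈ Q} = Q := by ext w; simp [hP]
    rw [this]; exact hQ
  · have : {w : X | P → w ∈ Q} = Set.univ := by ext w; simp [hP]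
    rw [this]; exact isOpen_univ

/-- Avoiding finitely many nontrivial affine hyperplanes inside a nonempty open set. -/
theorem avoid {κ : Type*} (s : Finset κ) (p : κ → Fin d → ℝ) (c : κ → ℝ)
    (hs : ∀ k ∈ s, ∃ u, dotp (p k) u + c k ≠ 0) :
    ∀ (O : Set (Fin d → ℝ)), IsOpen O → O.Nonempty →
      ∃ y ∈ O, ∀ k ∈ s, dotp (p k) y + c k ≠ 0 := by
  classical
  induction s using Finset.cons_induction with
  | empty =>
    intro O _ hne
    obtain ⟨y, hy⟩ := hne
    exact ⟨y, hy, by simp⟩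
  | cons k s hk ih =>
    intro O hO hne
    set O' := O ∩ {u | dotp (p k) u + c k ≠ 0} with hO'def
    have hO'open : IsOpen O' := by
      apply hO.inter
      have : {u : Fin d → ℝ | dotp (p k) u + c k ≠ 0} =
          (fun u => dotp (p k) u + c k) ⁻¹' ({0}ᶜ) := by ext u; simp
      rw [this]
      exact (isOpen_compl_singleton).preimage (cont_aff (p k) (c k))
    have hO'ne : O'.Nonempty := by
      by_contra hemp
      rw [Set.not_nonempty_iff_eq_empty] at hemp
      have hall : ∀ x ∈ O, dotp (p k) x + c k = 0 := by
        intro x hx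
        by_contra hne'
        have : x ∈ O' := ⟨hx, hne'⟩
        rw [hemp] at this; exact this
      obtain ⟨w, hw⟩ := hne
      have h0 : ∀ x ∈ O, 0 ≤ dotp (p k) x + c k := fun x hx => le_of_eq (hall x hx).symm
      have := aff_nonneg_zero hO hw h0 (hall w hw)
      obtain ⟨u, hu⟩ := hs k (Finset.mem_cons_self k s)
      exact hu (this u)
    obtain ⟨y, hy, hys⟩ := ih (fun k' hk' => hs k' (Finset.mem_cons_of_mem hk')) O' hO'open hO'ne
    refine ⟨y, hy.1, ?_⟩
    intro k' hk'
    rcases Finset.mem_cons.1 hk' with rfl | hmem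
    · exact hy.2
    · exact hys k' hmem


theorem mem_cell_iff {a : ι → Fin d → ℝ} {b : ι → ℝ} {σ : ι → ι → Bool} {x : Fin d → ℝ} :
    x ∈ cell a b σ ↔ ∀ p q : ι, (σ p q = true → affA a b p x ≤ affA a b q x) ∧
      (σ p q = false → affA a b q x ≤ affA a b p x) := by
  constructor
  · intro h p q
    have hpq := Set.mem_iInter.1 (Set.mem_iInter.1 h p) q
    constructor
    · intro hb; rw [hb] at hpq; simpa using hpq
    · intro hb; rw [hb] at hpq; simpa using hpq
  · intro h
    apply Set.mem_iInter.2; intro p; apply Set.mem_iInter.2; intro q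
    cases hb : σ p q with
    | true =>
      simpa using (h p q).1 hb
    | false =>
      simpa using (h p q).2 hb

variable (a : ι → Fin d → ℝ) (b : ι → ℝ)

/-- A convex set with nonempty interior is contained in the closure of its interior. -/
theorem subset_closure_interior {S : Set (Fin d → ℝ)} (hS : Convex ℝ S)
    (hne : (interior S).Nonempty) : S ⊆ closure (interior S) := by
  intro x hx
  obtain ⟨y, hy⟩ := hne
  rw [mem_closure_iff]
  intro O hO hxO
  have hc : Continuous fun t : ℝ => x + t • (y - x) := by fun_prop
  have h0 : (fun t : ℝ => x + t • (y - x)) 0 = x := by simp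
  have hpre : (fun t : ℝ => x + t • (y - x)) ⁻¹' O ∈ nhds (0 : ℝ) := by
    apply hc.continuousAt.preimage_mem_nhds
    simp only [h0]
    exact hO.mem_nhds hxO
  obtain ⟨δ, hδ, hball⟩ := Metric.mem_nhds_iff.1 hpre
  set t : ℝ := min (δ / 2) 1 with ht
  have htpos : 0 < t := by
    apply lt_min (by linarith) one_pos
  have ht1 : t ≤ 1 := min_le_right _ _
  have htδ : |t| < δ := by
    rw [abs_of_pos htpos]
    calc t ≤ δ / 2 := min_le_left _ _
      _ < δ := by linarith
  refine ⟨x + t • (y - x), ?_, ?_⟩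
  · apply hball
    simp [Metric.mem_ball, Real.dist_eq, htδ]
  · exact hS.add_smul_sub_mem_interior hx hy ⟨htpos, ht1⟩

/-- Every point of a suitable set `Δ` lies in a cell whose interior meets `interior Δ`. -/
theorem cover_cell {Δ : Set (Fin d → ℝ)} (hΔcl : ∀ x ∈ Δ, x ∈ closure (interior Δ))
    {x : Fin d → ℝ} (hx : x ∈ Δ) :
    ∃ σ : ι → ι → Bool, x ∈ cell a b σ ∧
      (interior (cell a b σ) ∩ interior Δ).Nonempty := by
  classical
  set N : Set (Fin d → ℝ) :=
    ⋂ pq : ι × ι, {z | affA a b pq.1 x < affA a b pq.2 x → z ∈ {w | affA a b pq.1 w < affA a b pq.2 w}} with hN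
  have hNopen : IsOpen N := by
    apply isOpen_iInter_of_finite
    intro pq
    exact isOpen_imp (isOpen_lt (affA_cont a b pq.1) (affA_cont a b pq.2))
  have hxN : x ∈ N := by
    rw [hN]
    simp only [Set.mem_iInter]
    intro pq h
    exact h
  have hONne : (N ∩ interior Δ).Nonempty := by
    have := mem_closure_iff.1 (hΔcl x hx) N hNopen hxN
    exact this
  obtain ⟨z, hzO, hzavoid⟩ := avoid
    (Finset.univ.filter fun pq : ι × ι => ∃ u, affA a b pq.1 u ≠ affA a b pq.2 u)
    (fun pq => a pq.2 - a pq.1) (fun pq => b pq.2 - b pq.1)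
    (by
      intro k hk
      rw [Finset.mem_filter] at hk
      obtain ⟨u, hu⟩ := hk.2
      refine ⟨u, ?_⟩
      rw [← aff_diff_eq]
      intro h
      apply hu
      linarith)
    (N ∩ interior Δ) (hNopen.inter isOpen_interior) hONne
  have hznd : ∀ p q : ι, (∃ u, affA a b p u ≠ affA a b q u) → affA a b p z ≠ affA a b q z := by
    intro p q hex
    have := hzavoid (p, q) (by simp [hex])
    rw [← aff_diff_eq] at this
    intro h
    apply this
    simp at h ⊢
    linarith
  have hzN : z ∈ N := hzO.1
  have hNprop : ∀ p q : ι, affA a b p x < affA a b q x → affA a b p z < affA a b q z := by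
    intro p q h
    exact Set.mem_iInter.1 hzN (p, q) h
  set σ : ι → ι → Bool := fun p q => decide (affA a b p z ≤ affA a b q z) with hσ
  have hxcell : x ∈ cell a b σ := by
    rw [mem_cell_iff]
    intro p q
    constructor
    · intro hb
      have hz : affA a b p z ≤ affA a b q z := by
        rw [hσ] at hb
        exact of_decide_eq_true hb
      by_contra hcon
      push_neg at hcon
      exact absurd (hNprop q p hcon) (by linarith)
    · intro hb
      have hz : affA a b q z < affA a b p z := by
        rw [hσ] at hb
        exact lt_of_not_ge (of_decide_eq_false hb)
      by_contra hcon
      push_neg at hcon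
      exact absurd (hNprop p q hcon) (by linarith)
  have hzint : z ∈ interior (cell a b σ) := by
    rw [mem_interior]
    refine ⟨⋂ pq : ι × ι,
      {w | affA a b pq.1 z < affA a b pq.2 z → w ∈ {v | affA a b pq.1 v < affA a b pq.2 v}},
      ?_, ?_, ?_⟩
    · intro w hw
      simp only [Set.mem_iInter, Set.mem_setOf_eq] at hw
      rw [mem_cell_iff]
      intro p q
      constructor
      · intro hb
        have hz : affA a b p z ≤ affA a b q z := by
          rw [hσ] at hb
          exact of_decide_eq_true hb
        rcases lt_or_eq_of_le hz with hlt | heq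
        · exact le_of_lt (hw (p, q) hlt)
        · by_cases hnd : ∃ u, affA a b p u ≠ affA a b q u
          · exact absurd heq (hznd p q hnd)
          · push_neg at hnd
            exact le_of_eq (hnd w)
      · intro hb
        have hz : affA a b q z < affA a b p z := by
          rw [hσ] at hb
          exact lt_of_not_ge (of_decide_eq_false hb)
        exact le_of_lt (hw (q, p) hz)
    · apply isOpen_iInter_of_finite
      intro pq
      exact isOpen_imp (isOpen_lt (affA_cont a b pq.1) (affA_cont a b pq.2))
    · simp only [Set.mem_iInter]
      intro pq h
      exact h
  exact ⟨σ, hxcell, ⟨z, hzint, hzO.2⟩⟩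


/-- On each (good) cell intersected with `Γ`, `f` agrees with a single affine piece. -/
theorem single_piece {Γ : Set (Fin d → ℝ)} (hΓv : Convex ℝ Γ) {f : (Fin d → ℝ) → ℝ}
    {Q : ι → Set (Fin d → ℝ)} (hQc : ∀ i, IsClosed (Q i)) (hQcov : Γ ⊆ ⋃ i, Q i)
    (hQf : ∀ i, ∀ x ∈ Q i, f x = affA a b i x) {σ : ι → ι → Bool}
    (hgood : (interior (cell a b σ) ∩ interior Γ).Nonempty) :
    ∃ i0, ∀ x ∈ cell a b σ ∩ Γ, f x = affA a b i0 x := by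
  classical
  obtain ⟨z0, hz0⟩ := hgood
  set O : Set (Fin d → ℝ) := interior (cell a b σ) ∩ interior Γ with hO
  have hOopen : IsOpen O := isOpen_interior.inter isOpen_interior
  have hOsubΓ : O ⊆ Γ := fun w hw => interior_subset hw.2
  have hOsubC : O ⊆ interior (cell a b σ) := fun w hw => hw.1
  obtain ⟨i0, hi0⟩ : ∃ i0, z0 ∈ Q i0 := by
    have := hQcov (hOsubΓ hz0)
    simpa using this
  refine ⟨i0, ?_⟩
  -- the two closed unions
  set V1 : Set (Fin d → ℝ) :=
    ⋃ j ∈ Finset.univ.filter (fun j : ι => ∀ u, affA a b j u = affA a b i0 u), Q j with hV1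
  set V2 : Set (Fin d → ℝ) :=
    ⋃ j ∈ Finset.univ.filter (fun j : ι => ¬ ∀ u, affA a b j u = affA a b i0 u), Q j with hV2
  have hV1c : IsClosed V1 := isClosed_biUnion_finset fun j _ => hQc j
  have hV2c : IsClosed V2 := isClosed_biUnion_finset fun j _ => hQc j
  have fact1 : ∀ w ∈ O, w ∈ V1 ∨ w ∈ V2 := by
    intro w hw
    obtain ⟨j, hj⟩ : ∃ j, w ∈ Q j := by simpa using hQcov (hOsubΓ hw)
    by_cases hcl : ∀ u, affA a b j u = affA a b i0 u
    · left; rw [hV1]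
      exact Set.mem_iUnion₂.2 ⟨j, Finset.mem_filter.2 ⟨Finset.mem_univ _, hcl⟩, hj⟩
    · right; rw [hV2]
      exact Set.mem_iUnion₂.2 ⟨j, Finset.mem_filter.2 ⟨Finset.mem_univ _, hcl⟩, hj⟩
  have fact2 : ∀ w ∈ O, w ∈ V1 → f w = affA a b i0 w := by
    intro w _ hw1
    rw [hV1] at hw1
    simp only [Set.mem_iUnion, Finset.mem_filter, Finset.mem_univ, true_and] at hw1
    obtain ⟨j, hcl, hwQ⟩ := hw1
    rw [hQf j w hwQ, hcl w]
  have fact3 : ∀ w ∈ O, w ∈ V1 → w ∈ V2 → False := by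
    intro w hwO hw1 hw2
    rw [hV2] at hw2
    simp only [Set.mem_iUnion, Finset.mem_filter, Finset.mem_univ, true_and] at hw2
    obtain ⟨j', hncl, hwQ'⟩ := hw2
    have h1 : f w = affA a b i0 w := fact2 w hwO hw1
    have h2 : f w = affA a b j' w := hQf j' w hwQ'
    exact hncl (eq_on_cell a b (hOsubC hwO) (by linarith))
  have hz0V1 : z0 ∈ V1 := by
    rw [hV1]
    exact Set.mem_iUnion₂.2 ⟨i0, Finset.mem_filter.2 ⟨Finset.mem_univ _, fun u => rfl⟩, hi0⟩
  -- O is contained in V1 by connectedness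
  have hOV1 : ∀ w ∈ O, f w = affA a b i0 w := by
    have hpre : IsPreconnected O :=
      (((cell_convex a b σ).interior).inter hΓv.interior).isPreconnected
    set U1 : Set (Fin d → ℝ) := V2ᶜ with hU1
    set U2 : Set (Fin d → ℝ) := V1ᶜ with hU2
    have hOno2 : ¬ (O ∩ U2).Nonempty := by
      intro hne
      have hcover : O ⊆ U1 ∪ U2 := by
        intro w hw
        by_cases h1 : w ∈ V1
        · left
          intro h2
          exact fact3 w hw h1 h2
        · right; exact h1
      have hne1 : (O ∩ U1).Nonempty := by
        refine ⟨z0, hz0, ?_⟩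
        intro h2
        exact fact3 z0 hz0 hz0V1 h2
      obtain ⟨w, hwO, hw12⟩ := hpre U1 U2 hV2c.isOpen_compl hV1c.isOpen_compl hcover hne1 hne
      rcases fact1 w hwO with h | h
      · exact hw12.2 h
      · exact hw12.1 h
    intro w hw
    apply fact2 w hw
    by_contra h1
    exact hOno2 ⟨w, hw, h1⟩
  -- now extend to the closed cell ∩ Γ
  intro x' hx'
  obtain ⟨hx'c, hx'Γ⟩ := hx'
  set v : Fin d → ℝ := z0 - x' with hv
  have hmemO : ∀ t : ℝ, t ∈ Set.Ioc (0:ℝ) 1 → x' + t • v ∈ O := by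
    intro t ht
    constructor
    · exact (cell_convex a b σ).add_smul_sub_mem_interior hx'c hz0.1 ht
    · exact hΓv.add_smul_sub_mem_interior hx'Γ hz0.2 ht
  have htIoc : ∀ m : ℕ, (1 / (m + 1 : ℝ)) ∈ Set.Ioc (0:ℝ) 1 := by
    intro m
    constructor
    · positivity
    · rw [div_le_one (by positivity)]
      have : (0:ℝ) ≤ m := Nat.cast_nonneg m
      linarith
  have hcovm : ∀ m : ℕ, ∃ j, x' + (1 / (m + 1 : ℝ)) • v ∈ Q j := by
    intro m
    have := hQcov (hOsubΓ (hmemO _ (htIoc m)))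
    simpa using this
  set u : ℕ → ι := fun m => (hcovm m).choose with hu
  have humem : ∀ m, x' + (1 / (m + 1 : ℝ)) • v ∈ Q (u m) := fun m => (hcovm m).choose_spec
  obtain ⟨j', hj'⟩ := Finite.exists_infinite_fiber u
  have hSinf : (u ⁻¹' {j'}).Infinite := Set.infinite_coe_iff.1 hj'
  have hSQ : ∀ m ∈ u ⁻¹' {j'}, x' + (1 / (m + 1 : ℝ)) • v ∈ Q j' := by
    intro m hm
    have : u m = j' := hm
    rw [← this]
    exact humem m
  -- x' belongs to Q j'
  have hx'Q : x' ∈ Q j' := by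
    rw [← (hQc j').closure_eq]
    rw [mem_closure_iff]
    intro U hUo hxU
    have hc : Continuous fun t : ℝ => x' + t • v := by fun_prop
    have h0 : (fun t : ℝ => x' + t • v) 0 = x' := by simp
    have hpre2 : (fun t : ℝ => x' + t • v) ⁻¹' U ∈ nhds (0:ℝ) := by
      apply hc.continuousAt.preimage_mem_nhds
      simp only [h0]
      exact hUo.mem_nhds hxU
    obtain ⟨δ, hδ, hball⟩ := Metric.mem_nhds_iff.1 hpre2
    obtain ⟨M, hM⟩ := exists_nat_one_div_lt hδ
    obtain ⟨m, hm⟩ := (hSinf.diff (Set.finite_Iic M)).nonempty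
    have hmS : m ∈ u ⁻¹' {j'} := hm.1
    have hmM : M < m := by
      by_contra h
      exact hm.2 (by simpa using le_of_not_gt h)
    refine ⟨x' + (1 / (m + 1 : ℝ)) • v, ?_, hSQ m hmS⟩
    apply hball
    rw [Metric.mem_ball, Real.dist_eq]
    have h1 : (0:ℝ) < 1 / (m + 1 : ℝ) := (htIoc m).1
    rw [sub_zero, abs_of_pos h1]
    calc (1 : ℝ) / (m + 1) ≤ 1 / (M + 1) := by
          apply one_div_le_one_div_of_le (by positivity)
          have : (M:ℝ) ≤ m := Nat.cast_le.2 (le_of_lt hmM)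
          linarith
      _ < δ := hM
  -- ψ vanishes at two distinct parameters
  obtain ⟨m1, hm1, m2, hm2, hm12⟩ := hSinf.nontrivial
  set t1 : ℝ := 1 / (m1 + 1 : ℝ) with ht1
  set t2 : ℝ := 1 / (m2 + 1 : ℝ) with ht2
  have ht12 : t1 ≠ t2 := by
    intro h
    apply hm12
    rw [ht1, ht2, one_div, one_div, inv_inj] at h
    exact_mod_cast add_right_cancel h
  have hψ : ∀ m ∈ u ⁻¹' {j'},
      affA a b j' (x' + (1 / (m + 1 : ℝ)) • v) = affA a b i0 (x' + (1 / (m + 1 : ℝ)) • v) := by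
    intro m hm
    have hwO := hmemO _ (htIoc m)
    rw [← hQf j' _ (hSQ m hm)]
    exact hOV1 _ hwO
  have e1 := hψ m1 hm1
  have e2 := hψ m2 hm2
  rw [affA_line, affA_line] at e1 e2
  set c : ℝ := affA a b j' x' - affA a b i0 x' with hc
  set dd : ℝ := dotp (a j') v - dotp (a i0) v with hdd
  have h1 : c + t1 * dd = 0 := by rw [hc, hdd]; linear_combination e1
  have h2 : c + t2 * dd = 0 := by rw [hc, hdd]; linear_combination e2
  have hdd0 : dd = 0 := by
    have h3 : (t1 - t2) * dd = 0 := by linear_combination h1 - h2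
    rcases mul_eq_zero.1 h3 with h | h
    · exact absurd (by linarith : t1 = t2) ht12
    · exact h
  have hc0 : c = 0 := by rw [hdd0] at h1; linarith
  rw [hQf j' x' hx'Q]
  rw [hc] at hc0
  linarith


theorem gamma_combo (y x : Fin d → ℝ) (t : ℝ) :
    y + t • (x - y) = (1 - t) • y + t • x := by
  ext k
  simp only [Pi.add_apply, Pi.smul_apply, Pi.sub_apply, smul_eq_mul]
  ring

/-- The key claim: for every `x ∈ Γ` and every good cell `σ'`, there is a good cell `τ`
whose affine piece dominates that of `σ'` on the piece of `σ'` and is at most `f x` at `x`. -/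
theorem claim_star {Γ : Set (Fin d → ℝ)} (hΓv : Convex ℝ Γ) {f : (Fin d → ℝ) → ℝ}
    (GoodF : Finset (ι → ι → Bool)) (gI : (ι → ι → Bool) → ι)
    (hGf : ∀ σ ∈ GoodF, ∀ x ∈ cell a b σ ∩ Γ, f x = affA a b (gI σ) x)
    (hGint : ∀ σ ∈ GoodF, (interior (cell a b σ) ∩ interior Γ).Nonempty)
    (hGcov : ∀ x ∈ Γ, ∃ σ ∈ GoodF, x ∈ cell a b σ)
    {x : Fin d → ℝ} (hx : x ∈ Γ) {σ' : ι → ι → Bool} (hσ' : σ' ∈ GoodF) :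
    ∃ τ ∈ GoodF,
      (∀ w ∈ cell a b σ' ∩ Γ, affA a b (gI σ') w ≤ affA a b (gI τ) w) ∧
      affA a b (gI τ) x ≤ f x := by
  classical
  set Dom : (ι → ι → Bool) → Prop :=
    fun τ => ∀ w ∈ cell a b σ' ∩ Γ, affA a b (gI σ') w ≤ affA a b (gI τ) w with hDom
  set W : Finset (ι → ι → Bool) := GoodF.filter Dom with hW
  have hσ'W : σ' ∈ W := by
    rw [hW, Finset.mem_filter]
    exact ⟨hσ', fun w _ => le_refl _⟩
  -- for bad cells, the piece is dominated on the whole cell of σ'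
  have hbad : ∀ τ ∈ GoodF, τ ∉ W →
      (∀ w ∈ cell a b σ', affA a b (gI τ) w ≤ affA a b (gI σ') w) ∧
      (∃ u, affA a b (gI σ') u ≠ affA a b (gI τ) u) := by
    intro τ hτG hτW
    have hndom : ∃ w ∈ cell a b σ' ∩ Γ, ¬ affA a b (gI σ') w ≤ affA a b (gI τ) w := by
      by_contra hno
      push_neg at hno
      exact hτW (by rw [hW, Finset.mem_filter]; exact ⟨hτG, fun w hw => hno w hw⟩)
    obtain ⟨w, hwmem, hwlt⟩ := hndom
    have hwlt' : affA a b (gI τ) w < affA a b (gI σ') w := lt_of_not_ge hwlt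
    rcases cell_comp a b σ' (gI σ') (gI τ) with h | h
    · exact absurd (h w hwmem.1) (by linarith)
    · exact ⟨fun w' hw' => h w' hw', ⟨w, by intro he; rw [he] at hwlt'; exact lt_irrefl _ hwlt'⟩⟩
  -- pick a generic starting point y*
  obtain ⟨ys, hysO, hysav⟩ := avoid (GoodF.filter fun τ => ¬ Dom τ)
    (fun τ => a (gI σ') - a (gI τ)) (fun τ => b (gI σ') - b (gI τ))
    (by
      intro τ hτ
      rw [Finset.mem_filter] at hτ
      have hτW : τ ∉ W := by
        rw [hW, Finset.mem_filter]
        intro h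
        exact hτ.2 h.2
      obtain ⟨u, hu⟩ := (hbad τ hτ.1 hτW).2
      refine ⟨u, ?_⟩
      rw [← aff_diff_eq]
      intro h
      exact hu (by linarith))
    (interior (cell a b σ') ∩ interior Γ) (isOpen_interior.inter isOpen_interior)
    (hGint σ' hσ')
  have hysC : ys ∈ cell a b σ' := interior_subset hysO.1
  have hysΓ : ys ∈ Γ := interior_subset hysO.2
  have hfys : f ys = affA a b (gI σ') ys := hGf σ' hσ' ys ⟨hysC, hysΓ⟩
  have hysdom : ∀ τ ∈ GoodF, τ ∉ W → affA a b (gI τ) ys < affA a b (gI σ') ys := by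
    intro τ hτG hτW
    have h1 := (hbad τ hτG hτW).1 ys hysC
    have h2 := hysav τ (by
      rw [Finset.mem_filter]
      refine ⟨hτG, ?_⟩
      intro h
      exact hτW (by rw [hW, Finset.mem_filter]; exact ⟨hτG, h⟩))
    rw [← aff_diff_eq] at h2
    rcases lt_or_eq_of_le h1 with h | h
    · exact h
    · exact absurd (by linarith) h2
  -- the segment from y* to x
  set γ : ℝ → (Fin d → ℝ) := fun t => ys + t • (x - ys) with hγ
  have hγc : Continuous γ := by rw [hγ]; fun_prop
  have hγ0 : γ 0 = ys := by rw [hγ]; simp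
  have hγ1 : γ 1 = x := by rw [hγ]; simp
  have hγΓ : ∀ t ∈ Set.Icc (0:ℝ) 1, γ t ∈ Γ := by
    intro t ht
    have heq : γ t = (1 - t) • ys + t • x := by
      rw [show γ t = ys + t • (x - ys) from rfl, gamma_combo]
    rw [heq]
    exact hΓv hysΓ hx (by linarith [ht.2]) ht.1 (by ring)
  set T : Set ℝ := ⋃ τ ∈ W, ⋃ β ∈ GoodF,
    {t | t ∈ Set.Icc (0:ℝ) 1 ∧ γ t ∈ cell a b β ∧
      affA a b (gI τ) (γ t) ≤ affA a b (gI β) (γ t)} with hT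
  have hTc : IsClosed T := by
    rw [hT]
    apply isClosed_biUnion_finset
    intro τ _
    apply isClosed_biUnion_finset
    intro β _
    have hset : {t : ℝ | t ∈ Set.Icc (0:ℝ) 1 ∧ γ t ∈ cell a b β ∧
        affA a b (gI τ) (γ t) ≤ affA a b (gI β) (γ t)}
        = Set.Icc (0:ℝ) 1 ∩ ((γ ⁻¹' cell a b β) ∩
          {t : ℝ | (fun t => affA a b (gI τ) (γ t)) t ≤ (fun t => affA a b (gI β) (γ t)) t}) := by
      ext t
      simp only [Set.mem_setOf_eq, Set.mem_inter_iff, Set.mem_preimage, and_assoc]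
    rw [hset]
    refine isClosed_Icc.inter (((cell_closed a b β).preimage hγc).inter ?_)
    exact isClosed_le ((affA_cont a b (gI τ)).comp hγc) ((affA_cont a b (gI β)).comp hγc)
  have hT0 : (0:ℝ) ∈ T := by
    rw [hT]
    refine Set.mem_biUnion hσ'W (Set.mem_biUnion hσ' ?_)
    refine ⟨⟨le_refl _, zero_le_one⟩, ?_, le_refl _⟩
    rw [hγ0]
    exact hysC
  have hTsub : T ⊆ Set.Icc (0:ℝ) 1 := by
    rw [hT]
    intro t ht
    simp only [Set.mem_iUnion, Set.mem_setOf_eq] at ht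
    obtain ⟨τ, _, β, _, h⟩ := ht
    exact h.1
  have hTbdd : BddAbove T := ⟨1, fun t ht => (hTsub ht).2⟩
  set ts : ℝ := sSup T with hts
  have htsT : ts ∈ T := hTc.csSup_mem ⟨0, hT0⟩ hTbdd
  have htsIcc : ts ∈ Set.Icc (0:ℝ) 1 := hTsub htsT
  obtain ⟨τ0, hτ0W, β0, hβ0G, htsmem⟩ : ∃ τ0 ∈ W, ∃ β0 ∈ GoodF,
      ts ∈ Set.Icc (0:ℝ) 1 ∧ γ ts ∈ cell a b β0 ∧
      affA a b (gI τ0) (γ ts) ≤ affA a b (gI β0) (γ ts) := by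
    rw [hT] at htsT
    simp only [Set.mem_iUnion, Set.mem_setOf_eq] at htsT
    obtain ⟨τ, hτ, β, hβ, h⟩ := htsT
    exact ⟨τ, hτ, β, hβ, h⟩
  have hτ0G : τ0 ∈ GoodF := (Finset.mem_filter.1 hτ0W).1
  have hτ0dom : Dom τ0 := (Finset.mem_filter.1 hτ0W).2
  have hfts : f (γ ts) = affA a b (gI β0) (γ ts) :=
    hGf β0 hβ0G _ ⟨htsmem.2.1, hγΓ ts htsIcc⟩
  by_cases h1 : ts = 1
  · refine ⟨τ0, hτ0G, hτ0dom, ?_⟩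
    have := htsmem.2.2
    rw [h1, hγ1] at this hfts
    rw [hfts]
    exact this
  -- ts < 1 : find the cell just to the right
  have hts1 : ts < 1 := lt_of_le_of_ne htsIcc.2 h1
  have hVmem : ∃ δ > 0, ∀ s : ℝ, |s - ts| < δ → ∀ β ∈ GoodF, γ ts ∉ cell a b β →
      γ s ∉ cell a b β := by
    set V : Set ℝ := ⋂ β : ι → ι → Bool,
      {t | (β ∈ GoodF ∧ γ ts ∉ cell a b β) → t ∈ (γ ⁻¹' (cell a b β))ᶜ} with hV
    have hVopen : IsOpen V := by
      apply isOpen_iInter_of_finite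
      intro β
      exact isOpen_imp (((cell_closed a b β).preimage hγc).isOpen_compl)
    have htsV : ts ∈ V := by
      rw [hV]
      simp only [Set.mem_iInter, Set.mem_setOf_eq]
      intro β hβ
      exact fun hmem => hβ.2 hmem
    obtain ⟨δ, hδ, hball⟩ := Metric.isOpen_iff.1 hVopen ts htsV
    refine ⟨δ, hδ, ?_⟩
    intro s hsδ β hβG hβnot hmem
    have hsV : s ∈ V := hball (by rwa [Metric.mem_ball, Real.dist_eq])
    rw [hV] at hsV
    simp only [Set.mem_iInter, Set.mem_setOf_eq] at hsV
    exact hsV β ⟨hβG, hβnot⟩ hmem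
  obtain ⟨δ, hδ, hVprop⟩ := hVmem
  set s : ℝ := min (ts + δ/2) 1 with hs
  have htss : ts < s := lt_min (by linarith) hts1
  have hs1 : s ≤ 1 := min_le_right _ _
  have hsIcc : s ∈ Set.Icc (0:ℝ) 1 := ⟨le_trans htsIcc.1 (le_of_lt htss), hs1⟩
  have hsδ : |s - ts| < δ := by
    rw [abs_of_pos (by linarith)]
    have : s ≤ ts + δ/2 := min_le_left _ _
    linarith
  obtain ⟨β', hβ'G, hγsβ'⟩ := hGcov (γ s) (hγΓ s hsIcc)
  have hγtsβ' : γ ts ∈ cell a b β' := by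
    by_contra hnot
    exact hVprop s hsδ β' hβ'G hnot hγsβ'
  have hfs : f (γ s) = affA a b (gI β') (γ s) := hGf β' hβ'G _ ⟨hγsβ', hγΓ s hsIcc⟩
  have hfts' : f (γ ts) = affA a b (gI β') (γ ts) :=
    hGf β' hβ'G _ ⟨hγtsβ', hγΓ ts htsIcc⟩
  -- β' is not in W
  have hβ'W : β' ∉ W := by
    intro hβ'W
    have hsT : s ∈ T := by
      rw [hT]
      refine Set.mem_biUnion hβ'W (Set.mem_biUnion hβ'G ?_)
      exact ⟨hsIcc, hγsβ', le_refl _⟩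
    have := le_csSup hTbdd hsT
    rw [← hts] at this
    linarith
  -- no witness at s
  have hnowit : ∀ τ ∈ W, affA a b (gI β') (γ s) < affA a b (gI τ) (γ s) := by
    intro τ hτW
    by_contra hcon
    push_neg at hcon
    have hsT : s ∈ T := by
      rw [hT]
      refine Set.mem_biUnion hτW (Set.mem_biUnion hβ'G ?_)
      exact ⟨hsIcc, hγsβ', hcon⟩
    have := le_csSup hTbdd hsT
    rw [← hts] at this
    linarith
  -- the three inequalities along the line
  have hA : affA a b (gI β') ys < affA a b (gI τ0) ys := by
    have h1 := hysdom β' hβ'G hβ'W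
    have h2 : affA a b (gI σ') ys ≤ affA a b (gI τ0) ys := hτ0dom ys ⟨hysC, hysΓ⟩
    linarith
  have hB : affA a b (gI β') (γ s) < affA a b (gI τ0) (γ s) := hnowit τ0 hτ0W
  have hC : affA a b (gI τ0) (γ ts) ≤ affA a b (gI β') (γ ts) := by
    have heq : affA a b (gI β0) (γ ts) = affA a b (gI β') (γ ts) := by
      rw [← hfts]; exact hfts'
    calc affA a b (gI τ0) (γ ts) ≤ affA a b (gI β0) (γ ts) := htsmem.2.2
      _ = affA a b (gI β') (γ ts) := heq
  exfalso
  have hγval : ∀ t : ℝ, γ t = ys + t • (x - ys) := fun t => rfl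
  rw [hγval s, affA_line, affA_line] at hB
  rw [hγval ts, affA_line, affA_line] at hC
  set c1 : ℝ := affA a b (gI τ0) ys with hc1
  set d1 : ℝ := dotp (a (gI τ0)) (x - ys) with hd1
  set c2 : ℝ := affA a b (gI β') ys with hc2
  set d2 : ℝ := dotp (a (gI β')) (x - ys) with hd2
  have ht0 : 0 ≤ ts := htsIcc.1
  -- hA : c2 < c1, hB : c2 + s * d2 < c1 + s * d1, hC : c1 + ts * d1 ≤ c2 + ts * d2
  nlinarith [mul_pos (sub_pos.2 htss) (sub_pos.2 hA), mul_nonneg ht0 (sub_nonneg.2 (le_of_lt hB))]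


theorem exists_min_on_cell {κ : Type*} (gI : κ → ι) (ρ : ι → ι → Bool) (s : Finset κ) :
    s.Nonempty → ∃ k0 ∈ s, ∀ k ∈ s, ∀ w ∈ cell a b ρ,
      affA a b (gI k0) w ≤ affA a b (gI k) w := by
  classical
  induction s using Finset.cons_induction with
  | empty => intro h; exact absurd h Finset.not_nonempty_empty
  | cons kk s hkk ih =>
    intro _
    by_cases hsne : s.Nonempty
    · obtain ⟨k0, hk0s, hmin⟩ := ih hsne
      rcases cell_comp a b ρ (gI kk) (gI k0) with h | h
      · refine ⟨kk, Finset.mem_cons_self _ _, ?_⟩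
        intro k hk w hw
        rcases Finset.mem_cons.1 hk with rfl | hks
        · exact le_refl _
        · exact le_trans (h w hw) (hmin k hks w hw)
      · refine ⟨k0, Finset.mem_cons_of_mem hk0s, ?_⟩
        intro k hk w hw
        rcases Finset.mem_cons.1 hk with rfl | hks
        · exact h w hw
        · exact hmin k hks w hw
    · rw [Finset.not_nonempty_iff_eq_empty] at hsne
      subst hsne
      refine ⟨kk, Finset.mem_cons_self _ _, ?_⟩
      intro k hk w hw
      rcases Finset.mem_cons.1 hk with rfl | hks
      · exact le_refl _
      · exact absurd hks (Finset.notMem_empty _)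

theorem exists_max_on_cell {κ : Type*} (gI : κ → ι) (ρ : ι → ι → Bool) (s : Finset κ) :
    s.Nonempty → ∃ k0 ∈ s, ∀ k ∈ s, ∀ w ∈ cell a b ρ,
      affA a b (gI k) w ≤ affA a b (gI k0) w := by
  classical
  induction s using Finset.cons_induction with
  | empty => intro h; exact absurd h Finset.not_nonempty_empty
  | cons kk s hkk ih =>
    intro _
    by_cases hsne : s.Nonempty
    · obtain ⟨k0, hk0s, hmax⟩ := ih hsne
      rcases cell_comp a b ρ (gI k0) (gI kk) with h | h
      · refine ⟨kk, Finset.mem_cons_self _ _, ?_⟩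
        intro k hk w hw
        rcases Finset.mem_cons.1 hk with rfl | hks
        · exact le_refl _
        · exact le_trans (hmax k hks w hw) (h w hw)
      · refine ⟨k0, Finset.mem_cons_of_mem hk0s, ?_⟩
        intro k hk w hw
        rcases Finset.mem_cons.1 hk with rfl | hks
        · exact h w hw
        · exact hmax k hks w hw
    · rw [Finset.not_nonempty_iff_eq_empty] at hsne
      subst hsne
      refine ⟨kk, Finset.mem_cons_self _ _, ?_⟩
      intro k hk w hw
      rcases Finset.mem_cons.1 hk with rfl | hks
      · exact le_refl _
      · exact absurd hks (Finset.notMem_empty _)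


end PWLAux

open PWLAux

/-- every piecewise linear function on a closed convex domain extends to a
piecewise linear function on all of ℝ^d. -/
theorem pwl_extension {d : ℕ} {Γ : Set (Fin d → ℝ)} (hΓc : IsClosed Γ) (hΓv : Convex ℝ Γ)
    (hint : (interior Γ).Nonempty) {f : (Fin d → ℝ) → ℝ} (hf : IsPWLOn Γ f) :
    ∃ F : (Fin d → ℝ) → ℝ, IsPWLOn (Set.univ : Set (Fin d → ℝ)) F ∧ ∀ x ∈ Γ, F x = f x := by
  classical
  obtain ⟨𝒬, h𝒬dom, h𝒬cov, h𝒬aff⟩ := hf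
  set ιt := {q : Set (Fin d → ℝ) // q ∈ 𝒬} with hιt
  haveI : Fintype ιt := FinsetCoe.fintype 𝒬
  haveI : DecidableEq ιt := Classical.decEq _
  -- Γ is nonempty, so ιt is nonempty
  obtain ⟨x0, hx0⟩ := id hint
  have hx0Γ : x0 ∈ Γ := interior_subset hx0
  have hx0cov : ∃ q ∈ 𝒬, x0 ∈ q := by
    have := hx0Γ
    rw [h𝒬cov] at this
    simpa using this
  obtain ⟨q0, hq0, hx0q0⟩ := hx0cov
  haveI hne_ιt : Nonempty ιt := ⟨⟨q0, hq0⟩⟩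
  -- pieces
  set Q : ιt → Set (Fin d → ℝ) := fun i => i.1 with hQ
  have hQc : ∀ i, IsClosed (Q i) := by
    intro i
    obtain ⟨U, _, _, hU⟩ := h𝒬dom i.1 i.2
    rw [hQ]
    simp only
    rw [hU]
    exact isClosed_closure
  have hQcov : Γ ⊆ ⋃ i, Q i := by
    intro x hx
    have := hx
    rw [h𝒬cov] at this
    simp only [Set.mem_iUnion] at this
    obtain ⟨q, hq, hxq⟩ := this
    exact Set.mem_iUnion.2 ⟨⟨q, hq⟩, hxq⟩
  have haff : ∀ i : ιt, ∃ (avv : Fin d → ℝ) (bvv : ℝ), ∀ x ∈ Q i, f x = dotp avv x + bvv := by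
    intro i
    obtain ⟨g, ⟨avv, bvv, hg⟩, hfg⟩ := h𝒬aff i.1 i.2
    exact ⟨avv, bvv, fun x hx => by rw [hfg x hx, hg x]⟩
  choose av bv hQf using haff
  have hQf' : ∀ i, ∀ x ∈ Q i, f x = affA av bv i x := hQf
  -- good cells
  set Good : (ιt → ιt → Bool) → Prop :=
    fun σ => (interior (cell av bv σ) ∩ interior Γ).Nonempty with hGood
  set GoodF : Finset (ιt → ιt → Bool) := Finset.univ.filter Good with hGoodF
  have hsingle : ∀ σ, Good σ → ∃ i0, ∀ x ∈ cell av bv σ ∩ Γ, f x = affA av bv i0 x :=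
    fun σ h => single_piece av bv hΓv hQc hQcov hQf' h
  set gI : (ιt → ιt → Bool) → ιt :=
    fun σ => if h : Good σ then (hsingle σ h).choose else Classical.arbitrary ιt with hgIdef
  have hgI : ∀ σ, Good σ → ∀ x ∈ cell av bv σ ∩ Γ, f x = affA av bv (gI σ) x := by
    intro σ h
    rw [hgIdef]
    simp only [dif_pos h]
    exact (hsingle σ h).choose_spec
  have hGoodF_good : ∀ σ ∈ GoodF, Good σ := by
    intro σ hσ
    rw [hGoodF, Finset.mem_filter] at hσ
    exact hσ.2
  have hGf : ∀ σ ∈ GoodF, ∀ x ∈ cell av bv σ ∩ Γ, f x = affA av bv (gI σ) x :=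
    fun σ hσ => hgI σ (hGoodF_good σ hσ)
  have hGint : ∀ σ ∈ GoodF, (interior (cell av bv σ) ∩ interior Γ).Nonempty :=
    fun σ hσ => hGoodF_good σ hσ
  have hclosΓ : ∀ x ∈ Γ, x ∈ closure (interior Γ) :=
    fun x hx => subset_closure_interior hΓv hint hx
  have hGcov : ∀ x ∈ Γ, ∃ σ ∈ GoodF, x ∈ cell av bv σ := by
    intro x hx
    obtain ⟨σ, hmem, hne⟩ := cover_cell av bv hclosΓ hx
    exact ⟨σ, by rw [hGoodF, Finset.mem_filter]; exact ⟨Finset.mem_univ _, hne⟩, hmem⟩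
  have hGNE : GoodF.Nonempty := by
    obtain ⟨σ, hσ, _⟩ := hGcov x0 hx0Γ
    exact ⟨σ, hσ⟩
  -- the W sets and the candidate extension F
  set Wfin : (ιt → ιt → Bool) → Finset (ιt → ιt → Bool) := fun σ =>
    insert σ (GoodF.filter fun τ =>
      ∀ w ∈ cell av bv σ ∩ Γ, affA av bv (gI σ) w ≤ affA av bv (gI τ) w) with hWfin
  have hWne : ∀ σ, (Wfin σ).Nonempty := fun σ => Finset.insert_nonempty _ _
  set F : (Fin d → ℝ) → ℝ := fun x =>
    GoodF.sup' hGNE fun σ => (Wfin σ).inf' (hWne σ) fun τ => affA av bv (gI τ) x with hF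
  -- F agrees with f on Γ
  have hFΓ : ∀ x ∈ Γ, F x = f x := by
    intro x hx
    apply le_antisymm
    · rw [hF]
      apply Finset.sup'_le
      intro σ hσ
      obtain ⟨τ, hτG, hτdom, hτval⟩ :=
        claim_star av bv hΓv GoodF gI hGf hGint hGcov hx hσ
      have hτW : τ ∈ Wfin σ := by
        rw [hWfin]
        exact Finset.mem_insert_of_mem (Finset.mem_filter.2 ⟨hτG, hτdom⟩)
      exact le_trans (Finset.inf'_le _ hτW) hτval
    · obtain ⟨σx, hσxG, hσxmem⟩ := hGcov x hx
      rw [hF]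
      have hfx : f x = affA av bv (gI σx) x := hGf σx hσxG x ⟨hσxmem, hx⟩
      apply Finset.le_sup'_of_le _ hσxG
      apply Finset.le_inf'
      intro τ hτ
      rw [hWfin] at hτ
      rcases Finset.mem_insert.1 hτ with rfl | hτf
      · exact le_of_eq hfx
      · have := (Finset.mem_filter.1 hτf).2 x ⟨hσxmem, hx⟩
        linarith [hfx]
  -- F is piecewise linear on all of ℝ^d
  have hFPWL : IsPWLOn (Set.univ : Set (Fin d → ℝ)) F := by
    set 𝒬F : Finset (Set (Fin d → ℝ)) :=
      (Finset.univ.filter fun σ : ιt → ιt → Bool =>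
        (interior (cell av bv σ)).Nonempty).image fun σ => cell av bv σ with h𝒬F
    refine ⟨𝒬F, ?_, ?_, ?_⟩
    · intro q hq
      rw [h𝒬F, Finset.mem_image] at hq
      obtain ⟨σ, hσ, rfl⟩ := hq
      rw [Finset.mem_filter] at hσ
      refine ⟨interior (cell av bv σ), isOpen_interior, hσ.2, ?_⟩
      apply Set.Subset.antisymm
      · exact subset_closure_interior (cell_convex av bv σ) hσ.2
      · exact closure_minimal interior_subset (cell_closed av bv σ)
    · apply Set.Subset.antisymm
      · intro x _
        have hcovu : ∀ y ∈ (Set.univ : Set (Fin d → ℝ)), y ∈ closure (interior Set.univ) := by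
          intro y _
          simp
        obtain ⟨σ, hmem, hne⟩ := cover_cell av bv hcovu (Set.mem_univ x)
        have hne' : (interior (cell av bv σ)).Nonempty := by
          obtain ⟨z, hz⟩ := hne
          exact ⟨z, hz.1⟩
        apply Set.mem_biUnion
          (show cell av bv σ ∈ 𝒬F by
            rw [h𝒬F, Finset.mem_image]
            exact ⟨σ, Finset.mem_filter.2 ⟨Finset.mem_univ _, hne'⟩, rfl⟩)
          hmem
      · exact Set.subset_univ _
    · intro q hq
      rw [h𝒬F, Finset.mem_image] at hq
      obtain ⟨ρ, hρ, rfl⟩ := hq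
      have hmins : ∀ σ, ∃ k0 ∈ Wfin σ, ∀ k ∈ Wfin σ, ∀ w ∈ cell av bv ρ,
          affA av bv (gI k0) w ≤ affA av bv (gI k) w :=
        fun σ => exists_min_on_cell av bv gI ρ (Wfin σ) (hWne σ)
      choose m hm1 hm2 using hmins
      have hinf : ∀ σ, ∀ w ∈ cell av bv ρ,
          ((Wfin σ).inf' (hWne σ) fun τ => affA av bv (gI τ) w) = affA av bv (gI (m σ)) w := by
        intro σ w hw
        apply le_antisymm
        · exact Finset.inf'_le _ (hm1 σ)
        · exact Finset.le_inf' _ _ fun τ hτ => hm2 σ τ hτ w hw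
      obtain ⟨σ0, hσ0G, hσ0max⟩ :=
        exists_max_on_cell av bv (fun σ => gI (m σ)) ρ GoodF hGNE
      refine ⟨affA av bv (gI (m σ0)), ⟨av (gI (m σ0)), bv (gI (m σ0)), fun x => rfl⟩, ?_⟩
      intro x hxρ
      rw [hF]
      apply le_antisymm
      · apply Finset.sup'_le
        intro σ hσ
        rw [hinf σ x hxρ]
        exact hσ0max σ hσ x hxρ
      · apply Finset.le_sup'_of_le _ hσ0G
        rw [hinf σ0 x hxρ]
  exact ⟨F, hFPWL, hFΓ⟩
end
end
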